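/- arXiv:2510.19553 — 3 statements merged into one kernel-verified Lean document; each statement's English description precedes it below -/
import Mathlib

section
/- For every nonzero ideal I of the ring of integers O_K of a number field K, there exists x in O_K such that (2x-1)(3x-1) ≡ 0 (mod I). -/
open NumberField

lemma int_lemma (n : ℕ) (hn : n ≠ 0) :
    ∃ x : ℤ, (n : ℤ) ∣ (2 * x - 1) * (3 * x - 1) := by
  set e := n.factorization 2 with he
  set m := n / 2 ^ e with hm
  have hsplit : 2 ^ e * m = n := Nat.ordProj_mul_ordCompl_eq_self n 2
  have hmodd : ¬ (2 ∣ m) := Nat.not_dvd_ordCompl (by norm_num) hn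
  set P : ℤ := (2 : ℤ) ^ e with hP
  set M : ℤ := (m : ℤ) with hM
  have hc3P : IsCoprime (3 : ℤ) P := (by norm_num : IsCoprime (3 : ℤ) 2).pow_right
  have hc2m : IsCoprime (2 : ℤ) M := by
    have hg : Nat.Coprime 2 m := Nat.coprime_two_left.mpr (Nat.odd_iff.mpr (by
      have := Nat.two_dvd_ne_zero.mp hmodd; omega))
    refine Int.isCoprime_iff_gcd_eq_one.mpr ?_
    rw [hM, show (2:ℤ) = ((2:ℕ):ℤ) from rfl, Int.gcd_natCast_natCast]
    exact hg
  have hcPM : IsCoprime P M := hc2m.pow_left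
  obtain ⟨u, v, huv⟩ := hc3P
  obtain ⟨s, t, hst⟩ := hc2m
  obtain ⟨a, b, hab⟩ := hcPM
  refine ⟨s * (a * P) + u * (b * M), ?_⟩
  have hPdvd : P ∣ 3 * (s * (a * P) + u * (b * M)) - 1 :=
    ⟨3 * s * a - 3 * u * a - v, by linear_combination 3 * u * hab + huv⟩
  have hMdvd : M ∣ 2 * (s * (a * P) + u * (b * M)) - 1 :=
    ⟨2 * u * b - 2 * s * b - t, by linear_combination 2 * s * hab + hst⟩
  have : (n : ℤ) = M * P := by
    rw [← hsplit]; push_cast; ring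
  rw [this]
  exact mul_dvd_mul hMdvd hPdvd

theorem stmt_0 (K : Type*) [Field K] [NumberField K]
    (I : Ideal (𝓞 K)) (hI : I ≠ ⊥) :
    ∃ x : 𝓞 K, (2 * x - 1) * (3 * x - 1) ∈ I := by
  have hn : Ideal.absNorm I ≠ 0 := by
    simpa [Ideal.absNorm_eq_zero_iff] using hI
  obtain ⟨x, k, hk⟩ := int_lemma (Ideal.absNorm I) hn
  refine ⟨(x : 𝓞 K), ?_⟩
  have hmem : ((Ideal.absNorm I : ℤ) : 𝓞 K) ∈ I := by
    exact_mod_cast Ideal.absNorm_mem I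
  have : ((2 : 𝓞 K) * x - 1) * (3 * x - 1)
      = ((Ideal.absNorm I : ℤ) : 𝓞 K) * (k : 𝓞 K) := by
    have := congrArg (fun z : ℤ => (z : 𝓞 K)) hk
    push_cast at this ⊢
    linear_combination this
  rw [this]
  exact Ideal.mul_mem_right _ _ hmem
end

section
/- Let K be a number field. An element a of O_K is nonzero if and only if there exist x, y in O_K such that (2x-1)(3x-1) = y·a. -/
/-!
A nonzero `a` divides a nonzero rational integer `N`, since the ideal `(a)` meets `ℤ`
nontrivially in an integral extension. Writing `|N| = 2ᵏ m` with `m` odd, the Chinese remainder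
theorem gives an integer `x` with `3x ≡ 1 mod 2ᵏ` and `2x ≡ 1 mod m`, so `N ∣ (2x - 1)(3x - 1)`.
Conversely, `(2x - 1)(3x - 1) = 0` would make `2` or `3` a unit of `𝓞 K`, which is impossible
because units of `ℤ` are the only integers invertible in an integral extension.
-/

open NumberField

theorem exists_mul_dvd_sub_one_mul_sub_one {R : Type*} [CommRing R] {α β b c : R}
    (hbc : IsCoprime b c) (hα : IsCoprime α c) (hβ : IsCoprime β b) :
    ∃ x : R, b * c ∣ (α * x - 1) * (β * x - 1) := by
  obtain ⟨u, v, huv⟩ := hα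
  obtain ⟨s, t, hst⟩ := hβ
  obtain ⟨p, q, hpq⟩ := hbc
  -- `u` inverts `α` modulo `c`, `s` inverts `β` modulo `b`; glue them by CRT
  refine ⟨u * p * b + s * q * c, ?_⟩
  rw [mul_comm b c]
  refine mul_dvd_mul ⟨α * s * q - q - v * p * b, ?_⟩ ⟨β * u * p - p - t * q * c, ?_⟩
  · linear_combination p * b * huv + hpq
  · linear_combination q * c * hst + hpq

theorem Int.exists_dvd_two_mul_sub_one_mul_three_mul_sub_one {N : ℤ} (hN : N ≠ 0) :
    ∃ x : ℤ, N ∣ (2 * x - 1) * (3 * x - 1) := by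
  obtain ⟨k, m, hm, hNkm⟩ := Nat.exists_eq_two_pow_mul_odd (Int.natAbs_ne_zero.mpr hN)
  have hbc : IsCoprime ((2 : ℤ) ^ k) m := by
    exact_mod_cast Nat.isCoprime_iff_coprime.mpr ((Nat.coprime_two_left.mpr hm).pow_left k)
  have h2 : IsCoprime (2 : ℤ) m := by
    exact_mod_cast Nat.isCoprime_iff_coprime.mpr (Nat.coprime_two_left.mpr hm)
  have h3 : IsCoprime (3 : ℤ) (2 ^ k) :=
    (Int.isCoprime_iff_gcd_eq_one.mpr rfl : IsCoprime (3 : ℤ) 2).pow_right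
  obtain ⟨x, hx⟩ := exists_mul_dvd_sub_one_mul_sub_one hbc h2 h3
  refine ⟨x, Int.natAbs_dvd.mp ?_⟩
  rw [hNkm]
  exact_mod_cast hx

theorem exists_intCast_ne_zero_dvd {S : Type*} [CommRing S] [IsDomain S] [Algebra.IsIntegral ℤ S]
    {a : S} (ha : a ≠ 0) : ∃ n : ℤ, n ≠ 0 ∧ a ∣ (n : S) := by
  have hcomap : (Ideal.span {a}).comap (algebraMap ℤ S) ≠ ⊥ :=
    Ideal.comap_ne_bot_of_integral_mem ha (Ideal.mem_span_singleton_self a)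
      (Algebra.IsIntegral.isIntegral a)
  obtain ⟨n, hn, hn0⟩ := Submodule.exists_mem_ne_zero_of_ne_bot hcomap
  exact ⟨n, hn0, by simpa [Ideal.mem_span_singleton] using hn⟩

theorem two_mul_sub_one_mul_three_mul_sub_one_ne_zero {S : Type*} [CommRing S] [IsDomain S]
    [CharZero S] [Algebra.IsIntegral ℤ S] (x : S) : (2 * x - 1) * (3 * x - 1) ≠ 0 := by
  have not_isUnit (n : ℤ) (hn : ¬IsUnit n) : ¬IsUnit (n : S) := by
    rwa [← eq_intCast (algebraMap ℤ S), isUnit_map_iff]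
  refine mul_ne_zero (fun h ↦ not_isUnit 2 (by decide) ?_) (fun h ↦ not_isUnit 3 (by decide) ?_)
  · exact IsUnit.of_mul_eq_one x (by push_cast; linear_combination h)
  · exact IsUnit.of_mul_eq_one x (by push_cast; linear_combination h)

theorem stmt_1 (K : Type*) [Field K] [NumberField K] (a : 𝓞 K) :
    a ≠ 0 ↔ ∃ x y : 𝓞 K, (2 * x - 1) * (3 * x - 1) = y * a := by
  constructor
  · intro ha
    obtain ⟨n, hn, han⟩ := exists_intCast_ne_zero_dvd ha
    obtain ⟨x, hx⟩ := Int.exists_dvd_two_mul_sub_one_mul_three_mul_sub_one hn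
    have hx' : (n : 𝓞 K) ∣ (2 * (x : 𝓞 K) - 1) * (3 * x - 1) := by
      exact_mod_cast Int.cast_dvd_cast _ _ hx
    obtain ⟨y, hy⟩ := han.trans hx'
    exact ⟨x, y, by rw [hy, mul_comm]⟩
  · rintro ⟨x, y, hxy⟩ rfl
    exact two_mul_sub_one_mul_three_mul_sub_one_ne_zero x (by rw [hxy, mul_zero])
end

section
/- Let L ⊇ K be number fields. Then there exists a positive integer n such that for all α ∈ O_L, all nonzero ideals I ⊆ O_K, and all k ∈ K: if the product (α-1)(α-2)···(α-n) divides I·O_L (as ideals of O_L) and α ≡ k (mod I), then α ∈ O_K. -/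
/-!
Suppose `α ∉ 𝓞 K`. Embed `L` into a Galois closure `M` of `L/K`, let `β = ι α` and let
`γ = g β ≠ β` be a `K`-conjugate. Since the denominator of `α - k` is coprime to `I`, the
congruence `α ≡ k (mod I)` gives `γ ≡ β (mod I 𝓞_M)`, so `∏ⱼ (β - j)` divides `γ - β ≠ 0` and
`∏ⱼ |N(β - j)| ≤ |N(γ - β)|`. On the other hand, for every integer `j` at distance `≥ 2` from all
conjugates of `β`, the bound `|x - y| ≤ |x - j| |y - j|` gives `|N(γ - β)| ≤ |N(β - j)|²`. At most
`4 [M : ℚ]` integers `j` are too close to a conjugate, so for `n = 4 [M : ℚ] + 3` three of them are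
not, and the two estimates contradict each other.
-/

open NumberField
open scoped nonZeroDivisors

/-- `DvdNum L I a` means `I` divides the numerator ideal `num(a)` of `a ∈ L`,
where `num(a)` and `den(a)` are the unique coprime ideals with `(a) = num(a)/den(a)`. -/
def DvdNum (L : Type*) [Field L] [NumberField L] (I : Ideal (𝓞 L)) (a : L) : Prop :=
  ∃ N D : Ideal (𝓞 L), N ⊔ D = ⊤ ∧
    FractionalIdeal.spanSingleton (𝓞 L)⁰ a * (D : FractionalIdeal (𝓞 L)⁰ L) =
      (N : FractionalIdeal (𝓞 L)⁰ L) ∧ I ∣ N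

open Finset

section Analytic

lemma norm_sub_le_mul_of_two_le {E : Type*} [SeminormedAddCommGroup E] {x y z : E}
    (hx : 2 ≤ ‖x - z‖) (hy : 2 ≤ ‖y - z‖) : ‖x - y‖ ≤ ‖x - z‖ * ‖y - z‖ :=
  calc ‖x - y‖ ≤ ‖x - z‖ + ‖z - y‖ := norm_sub_le_norm_sub_add_norm_sub x z y
    _ = ‖x - z‖ + ‖y - z‖ := by rw [norm_sub_rev z]
    _ ≤ ‖x - z‖ * ‖y - z‖ := by nlinarith

lemma card_filter_norm_sub_natCast_lt_two_le (z : ℂ) (s : Finset ℕ) :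
    #(s.filter fun j : ℕ => ‖z - (j : ℂ)‖ < 2) ≤ 4 := by
  set m := ⌊z.re⌋₊
  have hsub : s.filter (fun j : ℕ => ‖z - (j : ℂ)‖ < 2) ⊆ Icc (m - 1) (m + 2) := by
    intro j hj
    have hre : |z.re - j| < 2 := by
      simpa using (Complex.abs_re_le_norm (z - j)).trans_lt (mem_filter.1 hj).2
    have h1 : m < j + 2 := (Nat.floor_lt' (by omega)).2 (by push_cast; linarith [abs_lt.1 hre])
    have h2 : j < m + 3 := by
      have : (j : ℝ) < m + 3 := by linarith [Nat.lt_floor_add_one z.re, abs_lt.1 hre]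
      exact_mod_cast this
    exact mem_Icc.2 ⟨by omega, by omega⟩
  calc _ ≤ #(Icc (m - 1) (m + 2)) := card_le_card hsub
    _ ≤ 4 := by simp only [Nat.card_Icc]; omega

variable {ι : Type*} [Fintype ι]

lemma card_sub_le_card_filter_forall_two_le_norm_sub (u : ι → ℂ) (n : ℕ) :
    n - 4 * Fintype.card ι ≤ #((Icc 1 n).filter fun j : ℕ => ∀ i, 2 ≤ ‖u i - (j : ℂ)‖) := by
  classical
  have hcover : Icc 1 n ⊆ (Icc 1 n).filter (fun j : ℕ => ∀ i, 2 ≤ ‖u i - (j : ℂ)‖) ∪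
      univ.biUnion fun i => (Icc 1 n).filter (fun j : ℕ => ‖u i - (j : ℂ)‖ < 2) := by
    intro j hj
    by_cases hgood : ∀ i, 2 ≤ ‖u i - (j : ℂ)‖
    · exact mem_union_left _ (mem_filter.2 ⟨hj, hgood⟩)
    · simp only [not_forall, not_le] at hgood
      obtain ⟨i, hi⟩ := hgood
      exact mem_union_right _ (mem_biUnion.2 ⟨i, mem_univ i, mem_filter.2 ⟨hj, hi⟩⟩)
  have hbad : #(univ.biUnion fun i => (Icc 1 n).filter (fun j : ℕ => ‖u i - (j : ℂ)‖ < 2)) ≤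
      4 * Fintype.card ι :=
    calc _ ≤ ∑ i, #((Icc 1 n).filter fun j : ℕ => ‖u i - (j : ℂ)‖ < 2) := card_biUnion_le
      _ ≤ ∑ _i : ι, 4 := sum_le_sum fun i _ => card_filter_norm_sub_natCast_lt_two_le (u i) _
      _ = 4 * Fintype.card ι := by rw [sum_const, card_univ, smul_eq_mul, mul_comm]
  have := (card_le_card hcover).trans (card_union_le _ _)
  rw [Nat.card_Icc] at this
  omega

lemma prod_norm_perm_sub_le_sq {E : Type*} [SeminormedAddCommGroup E] (u : ι → E)
    (π : Equiv.Perm ι) {z : E} (hz : ∀ i, 2 ≤ ‖u i - z‖) :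
    ∏ i, ‖u (π i) - u i‖ ≤ (∏ i, ‖u i - z‖) ^ 2 :=
  calc ∏ i, ‖u (π i) - u i‖ ≤ ∏ i, (‖u (π i) - z‖ * ‖u i - z‖) :=
        prod_le_prod (fun _ _ => norm_nonneg _) fun i _ => norm_sub_le_mul_of_two_le (hz _) (hz i)
    _ = (∏ i, ‖u i - z‖) ^ 2 := by
        rw [prod_mul_distrib, Equiv.prod_comp π fun i => ‖u i - z‖, sq]

theorem prod_norm_perm_sub_lt [Nonempty ι] (u : ι → ℂ) (π : Equiv.Perm ι) {n : ℕ}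
    (hn : 4 * Fintype.card ι + 3 ≤ n) (hone : ∀ j ∈ Icc 1 n, 1 ≤ ∏ i, ‖u i - (j : ℂ)‖) :
    ∏ i, ‖u (π i) - u i‖ < ∏ j ∈ Icc 1 n, ∏ i, ‖u i - (j : ℂ)‖ := by
  set s : ℕ → ℝ := fun j => ∏ i, ‖u i - (j : ℂ)‖
  set X := ∏ i, ‖u (π i) - u i‖
  have hgood : 2 < #((Icc 1 n).filter fun j : ℕ => ∀ i, 2 ≤ ‖u i - (j : ℂ)‖) :=
    lt_of_lt_of_le (by omega) (card_sub_le_card_filter_forall_two_le_norm_sub u n)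
  obtain ⟨j₁, hj₁, j₂, hj₂, j₃, hj₃, h₁₂, h₁₃, h₂₃⟩ := two_lt_card.1 hgood
  rw [mem_filter] at hj₁ hj₂ hj₃
  have hX₁ : X ≤ s j₁ ^ 2 := prod_norm_perm_sub_le_sq u π hj₁.2
  have hX₂ : X ≤ s j₂ ^ 2 := prod_norm_perm_sub_le_sq u π hj₂.2
  have hs₁ : 1 ≤ s j₁ := hone j₁ hj₁.1
  have hs₂ : 1 ≤ s j₂ := hone j₂ hj₂.1
  have hs₃ : 1 < s j₃ :=
    calc (1 : ℝ) < 2 ^ Fintype.card ι := one_lt_pow₀ one_lt_two Fintype.card_ne_zero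
      _ = ∏ _i : ι, (2 : ℝ) := by rw [prod_const, card_univ]
      _ ≤ s j₃ := prod_le_prod (fun _ _ => zero_le_two) fun i _ => hj₃.2 i
  have hXs : X ≤ s j₁ * s j₂ := by
    refine (mul_self_le_mul_self_iff (prod_nonneg fun _ _ => norm_nonneg _) (by positivity)).2 ?_
    calc X * X ≤ s j₁ ^ 2 * s j₂ ^ 2 :=
          mul_le_mul hX₁ hX₂ (prod_nonneg fun _ _ => norm_nonneg _) (by positivity)
      _ = s j₁ * s j₂ * (s j₁ * s j₂) := by ring
  have hsub : ({j₁, j₂, j₃} : Finset ℕ) ⊆ Icc 1 n :=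
    insert_subset_iff.2 ⟨hj₁.1, insert_subset_iff.2 ⟨hj₂.1, singleton_subset_iff.2 hj₃.1⟩⟩
  calc X ≤ s j₁ * s j₂ := hXs
    _ < s j₁ * s j₂ * s j₃ := lt_mul_of_one_lt_right (by positivity) hs₃
    _ = ∏ j ∈ {j₁, j₂, j₃}, s j := by
        rw [prod_insert (by simp [h₁₂, h₁₃]), prod_pair h₂₃, mul_assoc]
    _ ≤ ∏ j ∈ Icc 1 n, s j :=
        prod_le_prod_of_subset_of_one_le hsub (fun _ _ => prod_nonneg fun _ _ => norm_nonneg _)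
          fun j hj _ => hone j hj

end Analytic

section Norm

variable {M : Type*} [Field M] [NumberField M]

lemma prod_norm_embeddings_eq_abs_norm (x : 𝓞 M) :
    ∏ φ : M →ₐ[ℚ] ℂ, ‖φ x‖ = |(Algebra.norm ℤ x : ℝ)| := by
  rw [← norm_prod, ← Algebra.norm_eq_prod_embeddings, ← Algebra.coe_norm_int, eq_ratCast,
    Complex.norm_ratCast]
  push_cast
  rfl

lemma one_le_prod_norm_embeddings {x : 𝓞 M} (hx : x ≠ 0) : 1 ≤ ∏ φ : M →ₐ[ℚ] ℂ, ‖φ x‖ := by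
  rw [prod_norm_embeddings_eq_abs_norm, ← Int.cast_abs, ← Int.cast_one, Int.cast_le]
  exact Int.one_le_abs (Algebra.norm_ne_zero_iff.2 hx)

lemma prod_norm_embeddings_le_of_dvd {x y : 𝓞 M} (h : x ∣ y) (hy : y ≠ 0) :
    ∏ φ : M →ₐ[ℚ] ℂ, ‖φ x‖ ≤ ∏ φ : M →ₐ[ℚ] ℂ, ‖φ y‖ := by
  simp only [prod_norm_embeddings_eq_abs_norm, ← Int.cast_abs, Int.cast_le, Int.abs_eq_natAbs,
    Nat.cast_le]
  exact Int.natAbs_le_of_dvd_ne_zero (map_dvd _ h) (Algebra.norm_ne_zero_iff.2 hy)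

end Norm

theorem not_prod_sub_natCast_dvd_sub {M : Type*} [Field M] [NumberField M] (g : M ≃ₐ[ℚ] M)
    {β γ : 𝓞 M} (hγ : (γ : M) = g β) (hne : γ ≠ β) {n : ℕ}
    (hn : 4 * Module.finrank ℚ M + 3 ≤ n) :
    ¬ (∏ j ∈ Icc 1 n, (β - j)) ∣ γ - β := by
  intro hdvd
  have hsub : γ - β ≠ 0 := sub_ne_zero.2 hne
  have hprod : ∏ j ∈ Icc 1 n, (β - j) ≠ 0 := fun h => hsub (zero_dvd_iff.1 (h ▸ hdvd))
  have : Nonempty (M →ₐ[ℚ] ℂ) := by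
    rw [← Fintype.card_pos_iff, AlgHom.card]; exact Module.finrank_pos
  let π : Equiv.Perm (M →ₐ[ℚ] ℂ) := AlgEquiv.arrowCongr g.symm AlgEquiv.refl
  have hπ : ∀ φ : M →ₐ[ℚ] ℂ, φ γ = π φ β := fun φ => by simp [π, hγ, AlgEquiv.arrowCongr]
  have hone : ∀ j ∈ Icc 1 n, 1 ≤ ∏ φ : M →ₐ[ℚ] ℂ, ‖φ β - (j : ℂ)‖ := fun j hj => by
    simpa using one_le_prod_norm_embeddings (prod_ne_zero_iff.1 hprod j hj)
  have hlt := prod_norm_perm_sub_lt (fun φ : M →ₐ[ℚ] ℂ => φ β) π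
    (by rwa [AlgHom.card]) hone
  have hle := prod_norm_embeddings_le_of_dvd hdvd hsub
  simp only [map_prod, map_sub, map_natCast, norm_prod, hπ] at hle
  rw [prod_comm] at hle
  exact (hle.trans_lt hlt).false

lemma Ideal.mem_of_mul_mem_of_one_sub_mem {R : Type*} [CommRing R] {J : Ideal R} {x d : R}
    (h : x * d ∈ J) (hd : 1 - d ∈ J) : x ∈ J := by
  have hx : x = x * (1 - d) + x * d := by ring
  exact hx ▸ J.add_mem (J.mul_mem_left x hd) h

lemma DvdNum.exists_mul_mem {L : Type*} [Field L] [NumberField L] {J : Ideal (𝓞 L)} {a : L}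
    (h : DvdNum L J a) : ∃ d m : 𝓞 L, 1 - d ∈ J ∧ m ∈ J ∧ (m : L) = a * d := by
  obtain ⟨N, D, hND, hprod, hJN⟩ := h
  have hNJ : N ≤ J := Ideal.le_of_dvd hJN
  obtain ⟨c, hc, d, hd, hcd⟩ := Submodule.mem_sup.1 (hND ▸ Submodule.mem_top (x := 1))
  have had : a * d ∈ (N : FractionalIdeal (𝓞 L)⁰ L) := hprod ▸
    FractionalIdeal.mul_mem_mul (FractionalIdeal.mem_spanSingleton_self _ a)
      ((FractionalIdeal.mem_coeIdeal _).2 ⟨d, hd, rfl⟩)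
  obtain ⟨m, hm, hma⟩ := (FractionalIdeal.mem_coeIdeal _).1 had
  exact ⟨d, m, by simpa [← hcd] using hNJ hc, hNJ hm, hma⟩

section Conjugates

variable {K L M : Type*} [Field K] [Field L] [Field M] [Algebra K L] [Algebra K M]

lemma map_mapAlgHom_map_algebraMap (τ : L →ₐ[K] M) (I : Ideal (𝓞 K)) :
    (I.map (algebraMap (𝓞 K) (𝓞 L))).map (RingOfIntegers.mapAlgHom τ) =
      I.map (algebraMap (𝓞 K) (𝓞 M)) := by
  change Ideal.map (RingOfIntegers.mapAlgHom τ : 𝓞 L →+* 𝓞 M) _ = _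
  rw [Ideal.map_map, AlgHom.comp_algebraMap]

theorem DvdNum.mapAlgHom_sub_mem [NumberField L] (ι σ : L →ₐ[K] M) {α : 𝓞 L} {I : Ideal (𝓞 K)}
    {k : K} (h : DvdNum L (I.map (algebraMap (𝓞 K) (𝓞 L))) (α - algebraMap K L k)) :
    RingOfIntegers.mapAlgHom σ α - RingOfIntegers.mapAlgHom ι α ∈
      I.map (algebraMap (𝓞 K) (𝓞 M)) := by
  obtain ⟨d, m, hd, hm, hmd⟩ := h.exists_mul_mem
  have hmap : ∀ (τ : L →ₐ[K] M) {x : 𝓞 L}, x ∈ I.map (algebraMap (𝓞 K) (𝓞 L)) →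
      RingOfIntegers.mapAlgHom τ x ∈ I.map (algebraMap (𝓞 K) (𝓞 M)) := fun τ x hx =>
    map_mapAlgHom_map_algebraMap τ I ▸ Ideal.mem_map_of_mem _ hx
  have hτ : ∀ τ : L →ₐ[K] M, (RingOfIntegers.mapAlgHom τ m : M) =
      (RingOfIntegers.mapAlgHom τ α - algebraMap K M k) * RingOfIntegers.mapAlgHom τ d := by
    intro τ
    change τ m = _
    rw [hmd, map_mul, map_sub, τ.commutes]
    rfl
  set Dσ := RingOfIntegers.mapAlgHom σ d
  set Dι := RingOfIntegers.mapAlgHom ι d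
  refine Ideal.mem_of_mul_mem_of_one_sub_mem (d := Dσ * Dι) ?_ ?_
  · have hid : (RingOfIntegers.mapAlgHom σ α - RingOfIntegers.mapAlgHom ι α) * (Dσ * Dι) =
        RingOfIntegers.mapAlgHom σ m * Dι - RingOfIntegers.mapAlgHom ι m * Dσ := by
      ext
      simp only [map_mul, map_sub]
      linear_combination (-(Dι : M)) * hτ σ + (Dσ : M) * hτ ι
    rw [hid]
    exact sub_mem (Ideal.mul_mem_right _ _ (hmap σ hm)) (Ideal.mul_mem_right _ _ (hmap ι hm))
  · have h1 : 1 - Dσ * Dι = (1 - Dσ) + Dσ * (1 - Dι) := by ring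
    rw [h1]
    exact add_mem (by simpa only [map_sub, map_one] using hmap σ hd)
      (Ideal.mul_mem_left _ _ (by simpa only [map_sub, map_one] using hmap ι hd))

end Conjugates

lemma exists_algEquiv_apply_ne {K L M : Type*} [Field K] [Field L] [Field M] [Algebra K L]
    [Algebra K M] [IsGalois K M] (ι : L →ₐ[K] M) {α : 𝓞 L}
    (hα : α ∉ Set.range (algebraMap (𝓞 K) (𝓞 L))) : ∃ g : M ≃ₐ[K] M, g (ι α) ≠ ι α := by
  by_contra! hfix
  obtain ⟨y, hy⟩ := (InfiniteGalois.mem_range_algebraMap_iff_fixed _).2 hfix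
  have hyα : algebraMap K L y = α := ι.injective ((ι.commutes y).trans hy)
  have hy : IsIntegral ℤ y := (isIntegral_algebraMap_iff (algebraMap K L).injective).1
    (hyα ▸ RingOfIntegers.isIntegral_coe α)
  exact hα ⟨⟨y, hy⟩, RingOfIntegers.ext hyα⟩

theorem exists_algebraMap_eq_of_dvd_of_dvdNum {K L M : Type*} [Field K] [Field L] [NumberField L]
    [Field M] [NumberField M] [Algebra K L] [Algebra K M] [IsGalois K M] (ι : L →ₐ[K] M)
    {α : 𝓞 L} {I : Ideal (𝓞 K)} {k : K}
    (hP : Ideal.span {∏ j ∈ Icc 1 (4 * Module.finrank ℚ M + 3), (α - (j : 𝓞 L))} ∣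
      I.map (algebraMap (𝓞 K) (𝓞 L)))
    (hnum : DvdNum L (I.map (algebraMap (𝓞 K) (𝓞 L))) (α - algebraMap K L k)) :
    ∃ x : 𝓞 K, algebraMap (𝓞 K) (𝓞 L) x = α := by
  by_contra hα
  obtain ⟨g, hg⟩ := exists_algEquiv_apply_ne ι hα
  have hmem := hnum.mapAlgHom_sub_mem ι ((g : M →ₐ[K] M).comp ι)
  have hle := Ideal.map_mono (f := RingOfIntegers.mapAlgHom ι) (Ideal.le_of_dvd hP)
  rw [map_mapAlgHom_map_algebraMap, Ideal.map_span, Set.image_singleton] at hle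
  refine not_prod_sub_natCast_dvd_sub g.toRingEquiv.toRatAlgEquiv rfl ?_ le_rfl
    (by simpa [map_prod] using Ideal.mem_span_singleton.1 (hle hmem))
  exact fun h => hg (congrArg (algebraMap (𝓞 M) M) h)

theorem stmt_4 (K L : Type*) [Field K] [NumberField K] [Field L] [NumberField L]
    [Algebra K L] :
    ∃ n : ℕ, 1 ≤ n ∧
      ∀ (α : 𝓞 L) (I : Ideal (𝓞 K)), I ≠ ⊥ → ∀ k : K,
        Ideal.span {∏ j ∈ Finset.Icc 1 n, (α - (j : 𝓞 L))} ∣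
            Ideal.map (algebraMap (𝓞 K) (𝓞 L)) I →
          DvdNum L (Ideal.map (algebraMap (𝓞 K) (𝓞 L)) I) ((α : L) - algebraMap K L k) →
          ∃ x : 𝓞 K, algebraMap (𝓞 K) (𝓞 L) x = α := by
  let M := IntermediateField.normalClosure K L (AlgebraicClosure L)
  have : NumberField M := NumberField.of_module_finite K M
  let ι : L →ₐ[K] M :=
    (normalClosure.algHomEquiv K L (AlgebraicClosure L)).symm (IsScalarTower.toAlgHom K L _)
  exact ⟨4 * Module.finrank ℚ M + 3, by omega, fun α I _ k hP hnum =>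
    exists_algebraMap_eq_of_dvd_of_dvdNum ι hP hnum⟩
end
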